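/- arXiv:math-ph/0612007 — 10 statements merged into one kernel-verified Lean document; each statement's English description precedes it below -/
import Mathlib

section
/- For all integers m ≥ 2, with c_j as above and d_k = ∑_{j=k+1}^{m-1} c_j (so d_{m-1} = 0), one has ∑_{j=0}^{m-1} d_j = (m/2) * c_1. Equivalently, ∑_{j=1}^{m-1} j*c_j = (m/2)*c_1. -/
/-!
Exchanging the order of summation turns `∑ₖ dₖ` into `∑ⱼ j cⱼ`, so both claims reduce, with
`n = m - 1` and the prefactor `2^(2-2m)/A` factored out, to
`∑_{j=1}^{n} j C(2n, n-j) = (n+1)/2 · C(2n, n-1)`.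
Put `i = n - j`. Absorption `i C(2n, i) = 2n C(2n-1, i-1)` and Pascal's rule give
`(2n - 2i) C(2n, i) = 2n (C(2n-1, i) - C(2n-1, i-1))`, so the sum telescopes to
`n C(2n-1, n-1) = (n+1)/2 · C(2n, n-1)`.
-/

open Finset

section CommRing

variable {R : Type*} [CommRing R]

theorem sum_range_sub_two_mul_mul_choose (N r : ℕ) :
    ∑ i ∈ range (r + 1), ((N + 1 : R) - 2 * i) * ((N + 1).choose i : R) =
      (N + 1) * (N.choose r : R) := by
  induction r with
  | zero => simp
  | succ r ih =>
    have hpascal := congrArg (Nat.cast : ℕ → R) (Nat.choose_succ_succ' N r)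
    have habsorb := congrArg (Nat.cast : ℕ → R) (Nat.add_one_mul_choose_eq N r)
    push_cast at hpascal habsorb
    rw [sum_range_succ, ih]
    push_cast
    linear_combination (2 : R) * habsorb + (N + 1 : R) * hpascal

theorem two_mul_sum_Icc_mul_choose_sub (n : ℕ) :
    2 * ∑ j ∈ Icc 1 (n + 1), (j : R) * ((2 * n + 2).choose (n + 1 - j) : R) =
      (n + 2) * ((2 * n + 2).choose n : R) := by
  have hreflect : ∑ j ∈ Icc 1 (n + 1), (j : R) * ((2 * n + 2).choose (n + 1 - j) : R) =
      ∑ i ∈ range (n + 1), ((n + 1 : R) - i) * ((2 * n + 2).choose i : R) := by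
    refine sum_nbij' (fun j ↦ n + 1 - j) (fun i ↦ n + 1 - i) ?_ ?_ ?_ ?_ ?_ <;>
      intro a ha <;> simp only [mem_Icc, mem_range] at ha ⊢
    any_goals omega
    rw [Nat.cast_sub (by omega)]
    push_cast; ring
  have habsorb := congrArg (Nat.cast : ℕ → R) (Nat.add_one_mul_choose_eq (2 * n + 1) n)
  have hsymm := congrArg (Nat.cast : ℕ → R) (Nat.choose_succ_right_eq (2 * n + 2) n)
  rw [show 2 * n + 2 - n = n + 2 by omega] at hsymm
  push_cast at habsorb hsymm
  calc 2 * ∑ j ∈ Icc 1 (n + 1), (j : R) * ((2 * n + 2).choose (n + 1 - j) : R)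
      = ∑ i ∈ range (n + 1),
          (((2 * n + 1 : ℕ) : R) + 1 - 2 * i) * ((2 * n + 1 + 1).choose i : R) := by
        rw [hreflect, mul_sum]
        exact sum_congr rfl fun i _ ↦ by push_cast; ring
    _ = (((2 * n + 1 : ℕ) : R) + 1) * ((2 * n + 1).choose n : R) :=
        sum_range_sub_two_mul_mul_choose (2 * n + 1) n
    _ = (n + 2) * ((2 * n + 2).choose n : R) := by push_cast; linear_combination habsorb + hsymm

end CommRing

theorem sum_range_sum_Icc_succ_eq_sum_nsmul {M : Type*} [AddCommMonoid M] (m : ℕ) (c : ℕ → M) :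
    ∑ k ∈ range m, ∑ j ∈ Icc (k + 1) (m - 1), c j = ∑ j ∈ Icc 1 (m - 1), j • c j := by
  rw [sum_comm' (t' := Icc 1 (m - 1)) (s' := range)]
  · simp
  · intro k j
    simp only [mem_range, mem_Icc]
    omega

theorem stmt_1_general (m : ℕ) (hm : 2 ≤ m)
    (A : ℝ)
    (c : ℕ → ℝ)
    (hc : ∀ j, c j = (2 : ℝ) ^ ((2 : ℤ) - 2 * (m : ℤ)) / A *
      (Nat.choose (2 * m - 2) (m - 1 - j) : ℝ))
    (d : ℕ → ℝ) (hd : ∀ k, d k = ∑ j ∈ Finset.Icc (k + 1) (m - 1), c j) :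
    (∑ j ∈ Finset.range m, d j) = ((m : ℝ) / 2) * c 1 ∧
    (∑ j ∈ Finset.Icc 1 (m - 1), (j : ℝ) * c j) = ((m : ℝ) / 2) * c 1 := by
  have hweighted : ∑ j ∈ Icc 1 (m - 1), (j : ℝ) * c j = (m : ℝ) / 2 * c 1 := by
    obtain ⟨n, rfl⟩ : ∃ n, m = n + 2 := ⟨m - 2, by omega⟩
    set K : ℝ := 2 ^ ((2 : ℤ) - 2 * ((n + 2 : ℕ) : ℤ)) / A
    have hcn : ∀ j, c j = K * ((2 * n + 2).choose (n + 1 - j) : ℝ) := fun j ↦ by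
      rw [hc, show 2 * (n + 2) - 2 = 2 * n + 2 by omega, show n + 2 - 1 = n + 1 by omega]
    calc ∑ j ∈ Icc 1 (n + 2 - 1), (j : ℝ) * c j
        = K * ∑ j ∈ Icc 1 (n + 1), (j : ℝ) * ((2 * n + 2).choose (n + 1 - j) : ℝ) := by
          rw [show n + 2 - 1 = n + 1 by omega, mul_sum]
          exact sum_congr rfl fun j _ ↦ by rw [hcn]; ring
      _ = ((n + 2 : ℕ) : ℝ) / 2 * c 1 := by
          rw [hcn 1, Nat.add_sub_cancel]
          push_cast
          linear_combination K / 2 * two_mul_sum_Icc_mul_choose_sub (R := ℝ) n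
  refine ⟨?_, hweighted⟩
  rw [sum_congr rfl fun k _ ↦ hd k, sum_range_sum_Icc_succ_eq_sum_nsmul]
  simpa only [nsmul_eq_mul] using hweighted

theorem stmt_1 (m : ℕ) (hm : 2 ≤ m)
    (A : ℝ) (hA : A = ∏ j ∈ Finset.Icc 1 m, ((2 * (j : ℝ) - 1) / (2 * (j : ℝ))))
    (c : ℕ → ℝ)
    (hc : ∀ j, c j = (2 : ℝ) ^ ((2 : ℤ) - 2 * (m : ℤ)) / A *
      (Nat.choose (2 * m - 2) (m - 1 - j) : ℝ))
    (d : ℕ → ℝ) (hd : ∀ k, d k = ∑ j ∈ Finset.Icc (k + 1) (m - 1), c j) :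
    (∑ j ∈ Finset.range m, d j) = ((m : ℝ) / 2) * c 1 ∧
    (∑ j ∈ Finset.Icc 1 (m - 1), (j : ℝ) * c j) = ((m : ℝ) / 2) * c 1 :=
  stmt_1_general m hm A c hc d hd
end

section
/- For all integers m ≥ 2, d_0 = (√π/2) * Γ(m+1)/Γ(m+1/2) - m/(2m-1), where d_0 = ∑_{j=1}^{m-1} c_j with c_j as above. -/
/-!
Both sides are expressed through central binomial coefficients: `A_m = C(2m, m) / 4^m`, and
`Γ(m + 1/2) = √π Γ(m + 1) A_m`, so the Gamma term equals `4^m / (2 C(2m, m))`. With `n = m - 1`,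
`d₀` is `4 / C(2m, m)` times the sum of the binomial coefficients `C(2n, i)` with `i < n`, which by
symmetry is `(4^n - C(2n, n)) / 2`. The identity then reduces to
`(n + 1) C(2n + 2, n + 1) = 2 (2n + 1) C(2n, n)`.
-/

open Finset Real

lemma prod_Icc_two_mul_sub_one_div_two_mul (n : ℕ) :
    ∏ j ∈ Icc 1 n, ((2 * (j : ℝ) - 1) / (2 * (j : ℝ))) = (n.centralBinom : ℝ) / 4 ^ n := by
  induction n with
  | zero => simp
  | succ n ih =>
    have h : ((n : ℝ) + 1) * (n + 1).centralBinom = 2 * (2 * n + 1) * n.centralBinom := by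
      exact_mod_cast n.succ_mul_centralBinom_succ
    rw [prod_Icc_succ_top (by omega), ih]
    push_cast
    field_simp
    linear_combination (-2 * (4 : ℝ) ^ n) * h

lemma Real.Gamma_nat_add_half_eq_mul_prod (n : ℕ) :
    Gamma (n + 1 / 2) = √π * Gamma (n + 1) * ∏ j ∈ Icc 1 n, ((2 * (j : ℝ) - 1) / (2 * j)) := by
  induction n with
  | zero => simpa using Gamma_one_half_eq
  | succ n ih =>
    have hn : (n : ℝ) + 1 ≠ 0 := by positivity
    rw [prod_Icc_succ_top (by omega), Nat.cast_succ, add_right_comm, Gamma_add_one (by positivity),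
      Gamma_add_one hn, ih]
    field_simp
    ring

lemma Real.sqrt_pi_div_two_mul_Gamma_div_Gamma_add_half (n : ℕ) :
    √π / 2 * (Gamma (n + 1) / Gamma (n + 1 / 2)) = 4 ^ n / (2 * n.centralBinom) := by
  have hΓ : Gamma (n + 1) ≠ 0 := (Gamma_pos_of_pos (by positivity)).ne'
  have hπ : √π ≠ 0 := (sqrt_pos.2 pi_pos).ne'
  have hcb : (n.centralBinom : ℝ) ≠ 0 := by exact_mod_cast n.centralBinom_ne_zero
  rw [Gamma_nat_add_half_eq_mul_prod, prod_Icc_two_mul_sub_one_div_two_mul]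
  field_simp

lemma Nat.two_mul_sum_range_choose_add_centralBinom (n : ℕ) :
    2 * ∑ i ∈ range n, (2 * n).choose i + n.centralBinom = 4 ^ n := by
  have key := Nat.sum_range_choose_halfway n
  have pascal (i : ℕ) : (2 * n + 1).choose (i + 1) = (2 * n).choose i + (2 * n).choose (i + 1) :=
    Nat.choose_succ_succ _ i
  rw [sum_range_succ', sum_congr rfl fun i _ => pascal i, sum_add_distrib] at key
  have shift := sum_range_succ' (fun i => (2 * n).choose i) n
  rw [sum_range_succ, ← centralBinom_eq_two_mul_choose] at shift
  simp only [Nat.choose_zero_right] at key shift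
  omega

lemma Finset.sum_Icc_one_sub {M : Type*} [AddCommMonoid M] (f : ℕ → M) (n : ℕ) :
    ∑ j ∈ Icc 1 n, f (n - j) = ∑ i ∈ range n, f i := by
  refine sum_nbij' (fun j => n - j) (fun i => n - i) ?_ ?_ ?_ ?_ (fun _ _ => rfl) <;>
    intro x hx <;> simp at hx ⊢ <;> omega

theorem stmt_2 (m : ℕ) (hm : 2 ≤ m)
    (A : ℝ) (hA : A = ∏ j ∈ Finset.Icc 1 m, ((2 * (j : ℝ) - 1) / (2 * (j : ℝ))))
    (c : ℕ → ℝ)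
    (hc : ∀ j, c j = (2 : ℝ) ^ ((2 : ℤ) - 2 * (m : ℤ)) / A *
      (Nat.choose (2 * m - 2) (m - 1 - j) : ℝ))
    (d₀ : ℝ) (hd₀ : d₀ = ∑ j ∈ Finset.Icc 1 (m - 1), c j) :
    d₀ = Real.sqrt π / 2 * (Real.Gamma ((m : ℝ) + 1) / Real.Gamma ((m : ℝ) + 1 / 2))
      - (m : ℝ) / (2 * (m : ℝ) - 1) := by
  obtain ⟨n, rfl⟩ : ∃ n, m = n + 1 := ⟨m - 1, by omega⟩
  have hpow : (2 : ℝ) ^ ((2 : ℤ) - 2 * ((n + 1 : ℕ) : ℤ)) = 1 / 4 ^ n := by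
    rw [show (2 : ℤ) - 2 * ((n + 1 : ℕ) : ℤ) = -((2 * n : ℕ) : ℤ) by push_cast; ring,
      zpow_neg, zpow_natCast, pow_mul]
    norm_num
  have hsum : d₀ = 1 / 4 ^ n / A * ∑ i ∈ range n, ((2 * n).choose i : ℝ) := by
    rw [hd₀, Nat.add_sub_cancel, mul_sum, ← sum_Icc_one_sub]
    refine sum_congr rfl fun j _ => ?_
    rw [hc, hpow, show 2 * (n + 1) - 2 = 2 * n by omega, Nat.add_sub_cancel]
  have hhalf : 2 * ∑ i ∈ range n, ((2 * n).choose i : ℝ) + n.centralBinom = 4 ^ n := by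
    exact_mod_cast n.two_mul_sum_range_choose_add_centralBinom
  have hsucc : ((n : ℝ) + 1) * (n + 1).centralBinom = 2 * (2 * n + 1) * n.centralBinom := by
    exact_mod_cast n.succ_mul_centralBinom_succ
  have hcb : ((n + 1).centralBinom : ℝ) ≠ 0 := by exact_mod_cast (n + 1).centralBinom_ne_zero
  rw [hsum, sqrt_pi_div_two_mul_Gamma_div_Gamma_add_half, hA,
    prod_Icc_two_mul_sub_one_div_two_mul]
  have h2n : 2 * (n : ℝ) + 1 ≠ 0 := by positivity
  push_cast
  rw [show 2 * ((n : ℝ) + 1) - 1 = 2 * n + 1 by ring]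
  field_simp
  linear_combination 4 ^ (n + 1) * (2 * (n : ℝ) + 1) * hhalf + 2 * 4 ^ n * hsucc
end

section
/- For all integers m ≥ 2, the quantity d_0 = (√π/2)*Γ(m+1)/Γ(m+1/2) - m/(2m-1) satisfies (1/2)√(mπ) - 1 ≤ d_0 ≤ (1/2)√(mπ). -/
open Real

private lemma gamma_mid_sq (a b : ℝ) (ha : 0 < a) (hb : 0 < b) :
    Real.Gamma ((a + b) / 2) ^ 2 ≤ Real.Gamma a * Real.Gamma b := by
  have hc := Real.convexOn_log_Gamma
  have h := hc.2 (Set.mem_Ioi.mpr ha) (Set.mem_Ioi.mpr hb)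
    (by norm_num : (0:ℝ) ≤ 1/2) (by norm_num : (0:ℝ) ≤ 1/2) (by norm_num)
  simp only [Function.comp_apply, smul_eq_mul] at h
  have hmid : (1:ℝ)/2 * a + 1/2 * b = (a + b) / 2 := by ring
  rw [hmid] at h
  have hmidpos : 0 < (a + b) / 2 := by linarith
  have hGm := Real.Gamma_pos_of_pos hmidpos
  have hGa := Real.Gamma_pos_of_pos ha
  have hGb := Real.Gamma_pos_of_pos hb
  have h2 : 2 * Real.log (Real.Gamma ((a + b) / 2)) ≤
      Real.log (Real.Gamma a) + Real.log (Real.Gamma b) := by linarith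
  have := Real.exp_le_exp.mpr h2
  rwa [Real.exp_add, Real.exp_log hGa, Real.exp_log hGb, two_mul, Real.exp_add,
    Real.exp_log hGm, ← sq] at this

private lemma gautschi_lower (x : ℝ) (hx : 0 < x) :
    Real.sqrt x * Real.Gamma (x + 1/2) ≤ Real.Gamma (x + 1) := by
  have key : x * Real.Gamma (x + 1/2) ^ 2 ≤ Real.Gamma (x + 1) ^ 2 := by
    have h := gamma_mid_sq x (x + 1) hx (by linarith)
    have hmid : (x + (x + 1)) / 2 = x + 1/2 := by ring
    rw [hmid] at h
    rw [Real.Gamma_add_one hx.ne'] at h ⊢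
    have hGa := Real.Gamma_pos_of_pos hx
    nlinarith [Real.Gamma_pos_of_pos (show (0:ℝ) < x + 1/2 by linarith)]
  have hG := Real.Gamma_pos_of_pos (show (0:ℝ) < x + 1/2 by linarith)
  have hG1 := Real.Gamma_pos_of_pos (show (0:ℝ) < x + 1 by linarith)
  nlinarith [Real.sq_sqrt hx.le, Real.sqrt_nonneg x,
    sq_nonneg (Real.sqrt x * Real.Gamma (x + 1/2) - Real.Gamma (x + 1))]

private lemma gautschi_upper (x : ℝ) (hx : 0 < x) :
    Real.Gamma (x + 1) ≤ Real.sqrt (x + 1/2) * Real.Gamma (x + 1/2) := by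
  have h := gamma_mid_sq (x + 1/2) (x + 3/2) (by linarith) (by linarith)
  have hmid : (x + 1/2 + (x + 3/2)) / 2 = x + 1 := by ring
  rw [hmid] at h
  have h32 : x + 3/2 = (x + 1/2) + 1 := by ring
  rw [h32, Real.Gamma_add_one (by positivity : (x:ℝ) + 1/2 ≠ 0)] at h
  -- h : Γ(x+1)^2 ≤ Γ(x+1/2) * ((x+1/2) * Γ(x+1/2))
  have hG := Real.Gamma_pos_of_pos (show (0:ℝ) < x + 1/2 by linarith)
  have hG1 := Real.Gamma_pos_of_pos (show (0:ℝ) < x + 1 by linarith)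
  have hs : Real.sqrt (x + 1/2) ^ 2 = x + 1/2 := Real.sq_sqrt (by linarith)
  have hsq : Real.Gamma (x + 1) ^ 2 ≤ (Real.sqrt (x + 1/2) * Real.Gamma (x + 1/2)) ^ 2 := by
    rw [mul_pow, hs]; nlinarith
  exact le_of_pow_le_pow_left₀ two_ne_zero (by positivity) hsq

theorem stmt_3 (m : ℕ) (hm : 2 ≤ m)
    (d₀ : ℝ)
    (hd₀ : d₀ = Real.sqrt π / 2 * (Real.Gamma ((m : ℝ) + 1) / Real.Gamma ((m : ℝ) + 1 / 2))
      - (m : ℝ) / (2 * (m : ℝ) - 1)) :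
    (1 / 2) * Real.sqrt ((m : ℝ) * π) - 1 ≤ d₀ ∧ d₀ ≤ (1 / 2) * Real.sqrt ((m : ℝ) * π) := by
  have hm2 : (2:ℝ) ≤ (m : ℝ) := by exact_mod_cast hm
  have hmpos : (0:ℝ) < (m : ℝ) := by linarith
  have hG := Real.Gamma_pos_of_pos (show (0:ℝ) < (m:ℝ) + 1/2 by linarith)
  have hpi := Real.pi_pos
  have hsm : (0:ℝ) < Real.sqrt (m:ℝ) := Real.sqrt_pos.mpr hmpos
  have hsp : (0:ℝ) < Real.sqrt π := Real.sqrt_pos.mpr hpi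
  -- ratio bounds
  have hlow : Real.sqrt (m:ℝ) ≤ Real.Gamma ((m:ℝ) + 1) / Real.Gamma ((m:ℝ) + 1/2) := by
    rw [le_div_iff₀ hG]
    exact gautschi_lower (m:ℝ) hmpos
  have hup : Real.Gamma ((m:ℝ) + 1) / Real.Gamma ((m:ℝ) + 1/2) ≤ Real.sqrt ((m:ℝ) + 1/2) := by
    rw [div_le_iff₀ hG]
    exact gautschi_upper (m:ℝ) hmpos
  -- √(mπ) = √m √π
  have hsplit : Real.sqrt ((m:ℝ) * π) = Real.sqrt (m:ℝ) * Real.sqrt π :=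
    Real.sqrt_mul hmpos.le π
  -- m/(2m-1) bounds
  have hden : (0:ℝ) < 2 * (m:ℝ) - 1 := by linarith
  have hfrac_le : (m:ℝ) / (2 * (m:ℝ) - 1) ≤ 1 := by
    rw [div_le_one hden]; linarith
  have hfrac_ge : (1:ℝ)/2 ≤ (m:ℝ) / (2 * (m:ℝ) - 1) := by
    rw [le_div_iff₀ hden]; linarith
  constructor
  · -- lower bound
    rw [hd₀, hsplit]
    have : Real.sqrt π / 2 * Real.sqrt (m:ℝ) ≤
        Real.sqrt π / 2 * (Real.Gamma ((m:ℝ) + 1) / Real.Gamma ((m:ℝ) + 1/2)) := by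
      apply mul_le_mul_of_nonneg_left hlow (by positivity)
    nlinarith
  · -- upper bound
    rw [hd₀, hsplit]
    have hstep : Real.sqrt ((m:ℝ) + 1/2) ≤ Real.sqrt (m:ℝ) + 1/4 := by
      have h1 : (m:ℝ) + 1/2 ≤ (Real.sqrt (m:ℝ) + 1/4) ^ 2 := by
        have h2 : Real.sqrt (m:ℝ) ^ 2 = (m:ℝ) := Real.sq_sqrt hmpos.le
        have h3 : (1:ℝ) ≤ Real.sqrt (m:ℝ) := by
          rw [show (1:ℝ) = Real.sqrt 1 by simp]
          exact Real.sqrt_le_sqrt (by linarith)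
        nlinarith
      calc Real.sqrt ((m:ℝ) + 1/2) ≤ Real.sqrt ((Real.sqrt (m:ℝ) + 1/4) ^ 2) :=
            Real.sqrt_le_sqrt h1
        _ = Real.sqrt (m:ℝ) + 1/4 := Real.sqrt_sq (by positivity)
    have hratio : Real.sqrt π / 2 * (Real.Gamma ((m:ℝ) + 1) / Real.Gamma ((m:ℝ) + 1/2)) ≤
        Real.sqrt π / 2 * (Real.sqrt (m:ℝ) + 1/4) := by
      apply mul_le_mul_of_nonneg_left (le_trans hup hstep) (by positivity)
    -- need √π/2 * 1/4 ≤ 1/2, i.e. √π ≤ 4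
    have hpi4 : Real.sqrt π ≤ 2 := by
      rw [show (2:ℝ) = Real.sqrt 4 by rw [show (4:ℝ) = 2^2 by norm_num, Real.sqrt_sq]; norm_num]
      exact Real.sqrt_le_sqrt (by nlinarith [Real.pi_le_four])
    nlinarith
end

section
/- For m ≥ 2, the quotient of Gamma functions satisfies Γ(m+1)/Γ(m+1/2) ≥ √m - 1/(2√m). -/
theorem stmt_4 (m : ℕ) (hm : 2 ≤ m) :
    Real.sqrt (m : ℝ) - 1 / (2 * Real.sqrt (m : ℝ)) ≤
      Real.Gamma ((m : ℝ) + 1) / Real.Gamma ((m : ℝ) + 1 / 2) := by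
  set x : ℝ := (m : ℝ) with hx
  have hx0 : (0:ℝ) < x := by
    rw [hx]
    exact_mod_cast (by omega : 0 < m)
  have hΓx : 0 < Real.Gamma x := Real.Gamma_pos_of_pos hx0
  have hΓ1 : 0 < Real.Gamma (x + 1) := Real.Gamma_pos_of_pos (by linarith)
  have hΓh : 0 < Real.Gamma (x + 1/2) := Real.Gamma_pos_of_pos (by linarith)
  have hs : 0 < Real.sqrt x := Real.sqrt_pos.mpr hx0
  -- log-convexity: Γ(x+1/2) ≤ Γ(x) * √x
  have hconv := Real.convexOn_log_Gamma.2 (Set.mem_Ioi.mpr hx0)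
      (Set.mem_Ioi.mpr (show (0:ℝ) < x + 1 by linarith))
      (by norm_num : (0:ℝ) ≤ (1/2:ℝ)) (by norm_num : (0:ℝ) ≤ (1/2:ℝ)) (by norm_num)
  have hmid : (1/2 : ℝ) • x + (1/2 : ℝ) • (x + 1) = x + 1/2 := by rw [smul_eq_mul, smul_eq_mul]; ring
  rw [hmid] at hconv
  simp only [Function.comp_apply, smul_eq_mul] at hconv
  have hΓ1eq : Real.Gamma (x + 1) = x * Real.Gamma x := Real.Gamma_add_one (ne_of_gt hx0)
  have hlog : Real.log (Real.Gamma (x + 1/2)) ≤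
      Real.log (Real.Gamma x * Real.sqrt x) := by
    rw [Real.log_mul (ne_of_gt hΓx) (ne_of_gt hs), Real.log_sqrt (le_of_lt hx0)]
    have : Real.log (Real.Gamma (x + 1)) = Real.log x + Real.log (Real.Gamma x) := by
      rw [hΓ1eq, Real.log_mul (ne_of_gt hx0) (ne_of_gt hΓx)]
    rw [this] at hconv
    linarith
  have hle : Real.Gamma (x + 1/2) ≤ Real.Gamma x * Real.sqrt x :=
    (Real.log_le_log_iff hΓh (mul_pos hΓx hs)).mp hlog
  have key : Real.sqrt x ≤ Real.Gamma (x + 1) / Real.Gamma (x + 1/2) := by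
    rw [le_div_iff₀ hΓh, hΓ1eq]
    calc Real.sqrt x * Real.Gamma (x + 1/2) ≤ Real.sqrt x * (Real.Gamma x * Real.sqrt x) := by
          exact mul_le_mul_of_nonneg_left hle (le_of_lt hs)
      _ = (Real.sqrt x * Real.sqrt x) * Real.Gamma x := by ring
      _ = x * Real.Gamma x := by rw [Real.mul_self_sqrt (le_of_lt hx0)]
  have : Real.sqrt x - 1 / (2 * Real.sqrt x) ≤ Real.sqrt x := by
    have : 0 < 1 / (2 * Real.sqrt x) := by positivity
    linarith
  linarith
end

section
/- Let m ≥ 2 and define the sequence a_1 = 0 and a_j = ((j-1)/(2m-j))*(a_{j-1}+1) for 2 ≤ j ≤ m-1. Then the sequence (a_j)_{1 ≤ j ≤ m-1} is nondecreasing. -/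
/-!
Multiplying out, the recursion reads `a (n + 1) * (2m - n - 1) = n * (a n + 1)`. Along it one
carries the invariant `0 ≤ a n` and `a n * (2m - 2n + 1) ≤ n - 1`; the invariant is exactly
strong enough to give `a n * (2m - n - 1) ≤ n * (a n + 1)`, i.e. `a n ≤ a (n + 1)`.
-/

section Step

variable {c n x y : ℝ}

theorem le_of_mul_sub_eq (hx : 0 ≤ x) (hbound : x * (c - 2 * n + 1) ≤ n - 1)
    (hc : 0 < c - n - 1) (hy : y * (c - n - 1) = n * (x + 1)) : x ≤ y := by
  have : x * (c - n - 1) ≤ y * (c - n - 1) := by nlinarith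
  exact le_of_mul_le_mul_right this hc

theorem nonneg_of_mul_sub_eq (hn : 0 ≤ n) (hx : 0 ≤ x) (hc : 0 < c - n - 1)
    (hy : y * (c - n - 1) = n * (x + 1)) : 0 ≤ y := by
  have : 0 ≤ y * (c - n - 1) := hy ▸ by positivity
  exact nonneg_of_mul_nonneg_left this hc

theorem mul_sub_le_of_mul_sub_eq (hn : 0 ≤ n) (hx : 0 ≤ x)
    (hbound : x * (c - 2 * n + 1) ≤ n - 1) (hc : 0 < c - n - 1)
    (hy : y * (c - n - 1) = n * (x + 1)) : y * (c - 2 * (n + 1) + 1) ≤ n := by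
  have hx' : (x + 1) * (c - 2 * n - 1) ≤ c - n - 1 := by nlinarith
  have : y * (c - 2 * (n + 1) + 1) * (c - n - 1) ≤ n * (c - n - 1) :=
    calc y * (c - 2 * (n + 1) + 1) * (c - n - 1)
        = n * ((x + 1) * (c - 2 * n - 1)) := by linear_combination (c - 2 * n - 1) * hy
      _ ≤ n * (c - n - 1) := mul_le_mul_of_nonneg_left hx' hn
  exact le_of_mul_le_mul_right this hc

end Step

theorem mul_sub_eq_of_recursion {m n : ℕ} {a : ℕ → ℝ} (hn : n + 2 ≤ m)
    (hrec : a (n + 1) = (((n + 1 : ℕ) : ℝ) - 1) / (2 * (m : ℝ) - ((n + 1 : ℕ) : ℝ)) *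
      (a (n + 1 - 1) + 1)) :
    a (n + 1) * (2 * m - n - 1) = n * (a n + 1) := by
  have hc : 2 * (m : ℝ) - (n + 1) ≠ 0 := by
    have : (n : ℝ) + 2 ≤ m := by exact_mod_cast hn
    linarith
  rw [hrec, Nat.add_sub_cancel]
  push_cast
  field_simp
  ring

theorem stmt_5_general (m : ℕ) (a : ℕ → ℝ) (ha1 : a 1 = 0)
    (ha : ∀ j, 2 ≤ j → j ≤ m - 1 →
      a j = (((j : ℝ) - 1) / (2 * (m : ℝ) - (j : ℝ))) * (a (j - 1) + 1)) :
    ∀ j k, 1 ≤ j → j ≤ k → k ≤ m - 1 → a j ≤ a k := by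
  have step : ∀ n, 1 ≤ n → n + 1 ≤ m - 1 →
      a (n + 1) * (2 * m - n - 1) = n * (a n + 1) ∧ (0 : ℝ) < 2 * m - n - 1 := fun n hn hle ↦
    ⟨mul_sub_eq_of_recursion (by omega) (ha (n + 1) (by omega) hle), by
      have : (n : ℝ) + 2 ≤ m := by exact_mod_cast (by omega : n + 2 ≤ m)
      linarith⟩
  have invariant : ∀ j, 1 ≤ j → j ≤ m - 1 → 0 ≤ a j ∧ a j * (2 * m - 2 * j + 1) ≤ j - 1 := by
    intro j hj
    induction j, hj using Nat.le_induction with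
    | base => simp [ha1]
    | succ n hn ih =>
      intro hle
      obtain ⟨hx, hbound⟩ := ih (by omega)
      obtain ⟨hy, hc⟩ := step n hn hle
      have hn0 : (0 : ℝ) ≤ n := n.cast_nonneg
      push_cast
      exact ⟨nonneg_of_mul_sub_eq hn0 hx hc hy,
        by simpa using mul_sub_le_of_mul_sub_eq hn0 hx hbound hc hy⟩
  intro j k hj hjk
  induction k, hjk using Nat.le_induction with
  | base => exact fun _ ↦ le_rfl
  | succ n hjn ih =>
    intro hle
    obtain ⟨hx, hbound⟩ := invariant n (by omega) (by omega)
    obtain ⟨hy, hc⟩ := step n (by omega) hle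
    exact (ih (by omega)).trans (le_of_mul_sub_eq hx hbound hc hy)

theorem stmt_5 (m : ℕ) (hm : 2 ≤ m) (a : ℕ → ℝ) (ha1 : a 1 = 0)
    (ha : ∀ j, 2 ≤ j → j ≤ m - 1 →
      a j = (((j : ℝ) - 1) / (2 * (m : ℝ) - (j : ℝ))) * (a (j - 1) + 1)) :
    ∀ j k, 1 ≤ j → j ≤ k → k ≤ m - 1 → a j ≤ a k :=
  stmt_5_general m a ha1 ha
end

section
/- For m ≥ 2 and 1 ≤ j ≤ m-1, with c_j and d_j as above, 0 ≤ d_j/c_j ≤ d_1/c_1. -/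
open Finset

/-!
The sequence `c` is, up to a positive factor, a row of binomial coefficients read backwards, so it
is log-concave: `c (i + 1) * c j ≤ c i * c (j + 1)` for `j < i`. Summing this termwise over the
tail `i > j` gives `d (j + 1) * c j ≤ d j * c (j + 1)`, so `d j / c j` decreases in `j`.
-/

theorem Nat.choose_mul_choose_succ_le {n a b : ℕ} (hab : a ≤ b) :
    n.choose a * n.choose (b + 1) ≤ n.choose (a + 1) * n.choose b := by
  refine Nat.le_of_mul_le_mul_right (c := (a + 1) * (b + 1)) ?_ (by positivity)
  calc n.choose a * n.choose (b + 1) * ((a + 1) * (b + 1))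
      = n.choose a * (a + 1) * (n.choose (b + 1) * (b + 1)) := by ring
    _ = n.choose a * (a + 1) * (n.choose b * (n - b)) := by rw [Nat.choose_succ_right_eq]
    _ = n.choose a * n.choose b * ((a + 1) * (n - b)) := by ring
    _ ≤ n.choose a * n.choose b * ((b + 1) * (n - a)) := by gcongr
    _ = n.choose a * (n - a) * (n.choose b * (b + 1)) := by ring
    _ = n.choose (a + 1) * (a + 1) * (n.choose b * (b + 1)) := by rw [Nat.choose_succ_right_eq]
    _ = n.choose (a + 1) * n.choose b * ((a + 1) * (b + 1)) := by ring

theorem Nat.choose_sub_succ_mul_choose_sub_le (n : ℕ) {M i j : ℕ} (hji : j < i) (hiM : i < M) :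
    n.choose (M - (i + 1)) * n.choose (M - j) ≤ n.choose (M - i) * n.choose (M - (j + 1)) := by
  obtain ⟨a, ha, hia⟩ : ∃ a, M - (i + 1) = a ∧ M - i = a + 1 := ⟨_, rfl, by omega⟩
  obtain ⟨b, hb, hjb⟩ : ∃ b, M - (j + 1) = b ∧ M - j = b + 1 := ⟨_, rfl, by omega⟩
  rw [ha, hia, hb, hjb]
  exact Nat.choose_mul_choose_succ_le (by omega)

theorem antitone_sum_Icc_div {c : ℕ → ℝ} {N : ℕ} (hpos : ∀ i, 0 < c i)
    (hlc : ∀ j i, j < i → i < N → c (i + 1) * c j ≤ c i * c (j + 1)) :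
    Antitone fun j ↦ (∑ i ∈ Icc (j + 1) N, c i) / c j := by
  refine antitone_nat_of_succ_le fun j ↦ ?_
  rw [div_le_div_iff₀ (hpos _) (hpos _), sum_mul, sum_mul]
  calc ∑ i ∈ Icc (j + 1 + 1) N, c i * c j
      = ∑ i ∈ Ico (j + 1) N, c (i + 1) * c j := by
        rw [← Ico_add_one_right_eq_Icc, sum_Ico_add' (fun i ↦ c i * c j)]
    _ ≤ ∑ i ∈ Ico (j + 1) N, c i * c (j + 1) := by
        refine sum_le_sum fun i hi ↦ ?_
        rw [mem_Ico] at hi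
        exact hlc j i (by omega) hi.2
    _ ≤ ∑ i ∈ Icc (j + 1) N, c i * c (j + 1) :=
        sum_le_sum_of_subset_of_nonneg Ico_subset_Icc_self
          fun i _ _ ↦ (mul_pos (hpos i) (hpos _)).le

theorem stmt_6_general (m : ℕ)
    (A : ℝ) (hA : A = ∏ j ∈ Finset.Icc 1 m, ((2 * (j : ℝ) - 1) / (2 * (j : ℝ))))
    (c : ℕ → ℝ)
    (hc : ∀ j, c j = (2 : ℝ) ^ ((2 : ℤ) - 2 * (m : ℤ)) / A *
      (Nat.choose (2 * m - 2) (m - 1 - j) : ℝ))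
    (d : ℕ → ℝ) (hd : ∀ k, d k = ∑ j ∈ Finset.Icc (k + 1) (m - 1), c j) :
    ∀ j, 1 ≤ j → j ≤ m - 1 → 0 ≤ d j / c j ∧ d j / c j ≤ d 1 / c 1 := by
  have hA_pos : 0 < A := hA ▸ prod_pos fun i hi ↦ by
    have : (1 : ℝ) ≤ i := by exact_mod_cast (mem_Icc.mp hi).1
    exact div_pos (by linarith) (by linarith)
  set K : ℝ := (2 : ℝ) ^ ((2 : ℤ) - 2 * (m : ℤ)) / A
  have hcpos : ∀ i, 0 < c i := fun i ↦ by
    rw [hc]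
    have : 0 < (2 * m - 2).choose (m - 1 - i) := Nat.choose_pos (by omega)
    positivity
  have hlc : ∀ j i, j < i → i < m - 1 → c (i + 1) * c j ≤ c i * c (j + 1) := by
    intro j i hji him
    have h : ((2 * m - 2).choose (m - 1 - (i + 1)) * (2 * m - 2).choose (m - 1 - j) : ℝ) ≤
        (2 * m - 2).choose (m - 1 - i) * (2 * m - 2).choose (m - 1 - (j + 1)) := by
      exact_mod_cast Nat.choose_sub_succ_mul_choose_sub_le (2 * m - 2) hji him
    have := mul_le_mul_of_nonneg_left h (mul_self_nonneg K)
    rw [hc, hc, hc, hc]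
    linarith
  intro j hj _
  have hd' : d = fun k ↦ ∑ i ∈ Icc (k + 1) (m - 1), c i := funext hd
  subst hd'
  exact ⟨div_nonneg (sum_nonneg fun i _ ↦ (hcpos i).le) (hcpos j).le,
    antitone_sum_Icc_div hcpos hlc hj⟩

theorem stmt_6 (m : ℕ) (hm : 2 ≤ m)
    (A : ℝ) (hA : A = ∏ j ∈ Finset.Icc 1 m, ((2 * (j : ℝ) - 1) / (2 * (j : ℝ))))
    (c : ℕ → ℝ)
    (hc : ∀ j, c j = (2 : ℝ) ^ ((2 : ℤ) - 2 * (m : ℤ)) / A *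
      (Nat.choose (2 * m - 2) (m - 1 - j) : ℝ))
    (d : ℕ → ℝ) (hd : ∀ k, d k = ∑ j ∈ Finset.Icc (k + 1) (m - 1), c j) :
    ∀ j, 1 ≤ j → j ≤ m - 1 → 0 ≤ d j / c j ∧ d j / c j ≤ d 1 / c 1 :=
  stmt_6_general m A hA c hc d hd
end

section
/- For integers q ≥ 3, with s_2 = 2π/(2q-1), one has W_q(s_2) = (4/π)∫_0^{2π} sin(t)/((2q-1)·sin(t/(2q-1))) dt ≥ (4/π)·Si(π) + (4/π)∫_π^{2π} sin(t)/(5·sin(t/5)) dt, where Si(π) = ∫_0^π (sin t)/t dt. In particular W_q(s_2) ≥ 1.7. -/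
open Real Set MeasureTheory intervalIntegral

/-!
Substituting `t = (2q-1) s` turns `W_q(s₂)` into `∫₀^{2π} sin t / ((2q-1) sin (t/(2q-1)))`,
whose denominator is `t · sinc (t/(2q-1))`. As `sin` is concave on `[0, π]`, `sinc` is positive
and antitone there. So the denominator is at most `t`, which bounds the integral over `[0, π]`
(where `sin t ≥ 0`) below by `Si(π)`; and it increases with `q`, so it is at least its value at
`q = 3`, which bounds the integral over `[π, 2π]` (where `sin t ≤ 0`) below by the `q = 3`
integral. That one has an elementary antiderivative, since
`sin 5x = sin x (1 + 2 cos 2x + 2 cos 4x)`. For `Si(π)` we integrate the degree-7 Taylor lower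
bound of `sin t / t`: the final margin over `1.7` is only about `0.01`, so degree 5 is too weak.
-/

lemma sinc_pos_of_nonneg_of_lt_pi {x : ℝ} (hx₀ : 0 ≤ x) (hxπ : x < π) : 0 < sinc x := by
  rcases hx₀.eq_or_lt with rfl | hx₀
  · simp
  · rw [sinc_of_ne_zero hx₀.ne']
    exact div_pos (sin_pos_of_pos_of_lt_pi hx₀ hxπ) hx₀

lemma antitoneOn_sinc : AntitoneOn sinc (Icc 0 π) := by
  intro x hx y hy hxy
  rcases hx.1.eq_or_lt with rfl | hx₀
  · rw [sinc_zero]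
    exact sinc_le_one y
  · have hy₀ : y ≠ 0 := (hx₀.trans_le hxy).ne'
    have h := strictConcaveOn_sin_Icc.concaveOn.slope_anti (x := 0) ⟨le_rfl, pi_pos.le⟩
      ⟨hx, hx₀.ne'⟩ ⟨hy, hy₀⟩ hxy
    simpa [slope_def_field, sinc_of_ne_zero hx₀.ne', sinc_of_ne_zero hy₀] using h

lemma mul_sin_div_eq_mul_sinc {a : ℝ} (ha : a ≠ 0) (t : ℝ) :
    a * sin (t / a) = t * sinc (t / a) := by
  rcases eq_or_ne t 0 with rfl | ht
  · simp
  · rw [sinc_of_ne_zero (div_ne_zero ht ha)]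
    field_simp

lemma mul_sin_div_le_mul_sin_div {a b t : ℝ} (ha : 0 < a) (hab : a ≤ b) (ht : 0 ≤ t)
    (hta : t ≤ a * π) : a * sin (t / a) ≤ b * sin (t / b) := by
  have hb : 0 < b := ha.trans_le hab
  rw [mul_sin_div_eq_mul_sinc ha.ne', mul_sin_div_eq_mul_sinc hb.ne']
  refine mul_le_mul_of_nonneg_left (antitoneOn_sinc ⟨by positivity, ?_⟩
    ⟨by positivity, ?_⟩ (div_le_div_of_nonneg_left ht ha hab)) ht
  · exact (div_le_div_of_nonneg_left ht ha hab).trans ((div_le_iff₀ ha).2 (by linarith))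
  · exact (div_le_iff₀ ha).2 (by linarith)

lemma sin_div_le_sin_div_mul_sin_div {c t : ℝ} (hc : 1 < c) (ht₀ : 0 ≤ t) (htπ : t ≤ π) :
    sin t / t ≤ sin t / (c * sin (t / c)) := by
  rcases ht₀.eq_or_lt with rfl | ht₀
  · simp
  have hc₀ : 0 < c := one_pos.trans hc
  have hden : 0 < c * sin (t / c) := by
    rw [mul_sin_div_eq_mul_sinc hc₀.ne']
    refine mul_pos ht₀ (sinc_pos_of_nonneg_of_lt_pi (by positivity) ?_)
    exact (div_lt_iff₀ hc₀).2 (by nlinarith [pi_pos])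
  have hle : c * sin (t / c) ≤ t := by
    rw [mul_sin_div_eq_mul_sinc hc₀.ne']
    exact mul_le_of_le_one_right ht₀.le (sinc_le_one _)
  exact div_le_div_of_nonneg_left (sin_nonneg_of_nonneg_of_le_pi ht₀.le htπ) hden hle

lemma sin_div_mul_sin_div_le_of_le {a b t : ℝ} (ha : 2 < a) (hab : a ≤ b)
    (ht : t ∈ Icc π (2 * π)) :
    sin t / (a * sin (t / a)) ≤ sin t / (b * sin (t / b)) := by
  obtain ⟨htπ, ht2π⟩ := ht
  have ha₀ : 0 < a := two_pos.trans ha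
  have ht₀ : 0 < t := pi_pos.trans_le htπ
  have hsin : sin t ≤ 0 := by
    simpa using sin_nonpos_of_nonpos_of_neg_pi_le (x := t - 2 * π) (by linarith) (by linarith)
  have hden : 0 < a * sin (t / a) := by
    rw [mul_sin_div_eq_mul_sinc ha₀.ne']
    refine mul_pos ht₀ (sinc_pos_of_nonneg_of_lt_pi (by positivity) ?_)
    exact (div_lt_iff₀ ha₀).2 (by nlinarith [pi_pos])
  have hmono := mul_sin_div_le_mul_sin_div ha₀ hab ht₀.le (by nlinarith [pi_pos])
  rw [div_eq_mul_inv, div_eq_mul_inv]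
  exact mul_le_mul_of_nonpos_left (inv_anti₀ hden hmono) hsin

lemma sin_div_mul_sin_div_eq_sinc_div_sinc {c t : ℝ} (hc : c ≠ 0) (ht : t ≠ 0) :
    sin t / (c * sin (t / c)) = sinc t / sinc (t / c) := by
  rw [mul_sin_div_eq_mul_sinc hc, sinc_of_ne_zero ht, div_div]

lemma ne_zero_of_mem_uIoo_zero {b t : ℝ} (ht : t ∈ uIoo 0 b) : t ≠ 0 := by
  rintro rfl
  simp only [uIoo, mem_Ioo, inf_lt_iff, lt_sup_iff, lt_irrefl, false_or] at ht
  exact lt_asymm ht.1 ht.2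

lemma intervalIntegrable_sin_div (b : ℝ) :
    IntervalIntegrable (fun t => sin t / t) volume 0 b :=
  (continuous_sinc.intervalIntegrable 0 b).congr_uIoo fun _ ht =>
    sinc_of_ne_zero (ne_zero_of_mem_uIoo_zero ht)

lemma intervalIntegrable_sin_div_mul_sin_div {a b c : ℝ} (hc : 0 < c) (ha : 0 ≤ a)
    (hab : a ≤ b) (hb : b < c * π) :
    IntervalIntegrable (fun t => sin t / (c * sin (t / c))) volume a b := by
  have hcont : ContinuousOn (fun t => sinc t / sinc (t / c)) (uIcc a b) := by
    refine continuous_sinc.continuousOn.div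
      (continuous_sinc.comp (continuous_id.div_const c)).continuousOn fun t ht => ?_
    rw [uIcc_of_le hab] at ht
    refine (sinc_pos_of_nonneg_of_lt_pi (div_nonneg (ha.trans ht.1) hc.le) ?_).ne'
    exact (div_lt_iff₀ hc).2 (by linarith [ht.2])
  refine hcont.intervalIntegrable.congr_uIoo fun t ht => ?_
  rw [uIoo_of_le hab] at ht
  exact (sin_div_mul_sin_div_eq_sinc_div_sinc hc.ne' (ha.trans_lt ht.1).ne').symm

lemma integral_sin_mul_div_sin {c : ℝ} (hc : c ≠ 0) (b : ℝ) :
    ∫ s in 0..b / c, sin (c * s) / sin s = ∫ t in 0..b, sin t / (c * sin (t / c)) := by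
  have h := integral_comp_div (fun s => sin (c * s) / (c * sin s)) hc (a := 0) (b := b)
  simp only [mul_div_cancel₀ _ hc, zero_div] at h
  rw [h, smul_eq_mul, ← intervalIntegral.integral_const_mul]
  exact integral_congr fun s _ => by rw [mul_div_assoc', mul_div_mul_left _ _ hc]

lemma nonneg_of_hasDerivAt_of_nonneg {f f' : ℝ → ℝ} (hf : ∀ x, HasDerivAt f (f' x) x)
    (h₀ : f 0 = 0) (hf' : ∀ x, 0 ≤ x → 0 ≤ f' x) {x : ℝ} (hx : 0 ≤ x) : 0 ≤ f x := by
  have hmono : MonotoneOn f (Ici 0) :=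
    monotoneOn_of_hasDerivWithinAt_nonneg (convex_Ici 0)
      (fun y _ => (hf y).continuousAt.continuousWithinAt) (fun y _ => (hf y).hasDerivWithinAt)
      (fun y hy => hf' y (by rw [interior_Ici] at hy; exact le_of_lt hy))
  simpa [h₀] using hmono self_mem_Ici hx hx

lemma cos_le_taylor4 {x : ℝ} (hx : 0 ≤ x) : cos x ≤ 1 - x ^ 2 / 2 + x ^ 4 / 24 := by
  have h := nonneg_of_hasDerivAt_of_nonneg (f := fun x => 1 - x ^ 2 / 2 + x ^ 4 / 24 - cos x)
    (f' := fun x => sin x - (x - x ^ 3 / 6))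
    (fun y => ((((hasDerivAt_const y 1).sub ((hasDerivAt_pow 2 y).div_const 2)).add
      ((hasDerivAt_pow 4 y).div_const 24)).sub (hasDerivAt_cos y)).congr_deriv (by ring))
    (by simp) (fun y hy => by linarith [sin_ge_sub_cube hy]) hx
  linarith

lemma sin_le_taylor5 {x : ℝ} (hx : 0 ≤ x) : sin x ≤ x - x ^ 3 / 6 + x ^ 5 / 120 := by
  have h := nonneg_of_hasDerivAt_of_nonneg (f := fun x => x - x ^ 3 / 6 + x ^ 5 / 120 - sin x)
    (f' := fun x => 1 - x ^ 2 / 2 + x ^ 4 / 24 - cos x)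
    (fun y => ((((hasDerivAt_id y).sub ((hasDerivAt_pow 3 y).div_const 6)).add
      ((hasDerivAt_pow 5 y).div_const 120)).sub (hasDerivAt_sin y)).congr_deriv (by ring))
    (by simp) (fun y hy => by linarith [cos_le_taylor4 hy]) hx
  linarith

lemma taylor6_le_cos {x : ℝ} (hx : 0 ≤ x) :
    1 - x ^ 2 / 2 + x ^ 4 / 24 - x ^ 6 / 720 ≤ cos x := by
  have h := nonneg_of_hasDerivAt_of_nonneg
    (f := fun x => cos x - (1 - x ^ 2 / 2 + x ^ 4 / 24 - x ^ 6 / 720))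
    (f' := fun x => x - x ^ 3 / 6 + x ^ 5 / 120 - sin x)
    (fun y => ((hasDerivAt_cos y).sub ((((hasDerivAt_const y 1).sub
      ((hasDerivAt_pow 2 y).div_const 2)).add ((hasDerivAt_pow 4 y).div_const 24)).sub
      ((hasDerivAt_pow 6 y).div_const 720))).congr_deriv (by ring))
    (by simp) (fun y hy => by linarith [sin_le_taylor5 hy]) hx
  linarith

lemma taylor7_le_sin {x : ℝ} (hx : 0 ≤ x) :
    x - x ^ 3 / 6 + x ^ 5 / 120 - x ^ 7 / 5040 ≤ sin x := by
  have h := nonneg_of_hasDerivAt_of_nonneg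
    (f := fun x => sin x - (x - x ^ 3 / 6 + x ^ 5 / 120 - x ^ 7 / 5040))
    (f' := fun x => cos x - (1 - x ^ 2 / 2 + x ^ 4 / 24 - x ^ 6 / 720))
    (fun y => ((hasDerivAt_sin y).sub ((((hasDerivAt_id y).sub
      ((hasDerivAt_pow 3 y).div_const 6)).add ((hasDerivAt_pow 5 y).div_const 120)).sub
      ((hasDerivAt_pow 7 y).div_const 5040))).congr_deriv (by ring))
    (by simp) (fun y hy => by linarith [taylor6_le_cos hy]) hx
  linarith

lemma integral_sin_div_eq_integral_sinc (b : ℝ) :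
    ∫ t in 0..b, sin t / t = ∫ t in 0..b, sinc t :=
  integral_congr_uIoo fun _ ht => (sinc_of_ne_zero (ne_zero_of_mem_uIoo_zero ht)).symm

lemma taylor_le_integral_sin_div {b : ℝ} (hb : 0 ≤ b) :
    b - b ^ 3 / 18 + b ^ 5 / 600 - b ^ 7 / 35280 ≤ ∫ t in 0..b, sin t / t := by
  have hpoly : ∫ t in 0..b, (1 - t ^ 2 / 6 + t ^ 4 / 120 - t ^ 6 / 5040) =
      b - b ^ 3 / 18 + b ^ 5 / 600 - b ^ 7 / 35280 := by
    rw [integral_eq_sub_of_hasDerivAt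
      (f := fun t => t - t ^ 3 / 18 + t ^ 5 / 600 - t ^ 7 / 35280)
      (fun t _ => ((((hasDerivAt_id t).sub ((hasDerivAt_pow 3 t).div_const 18)).add
        ((hasDerivAt_pow 5 t).div_const 600)).sub
        ((hasDerivAt_pow 7 t).div_const 35280)).congr_deriv (by ring))
      (Continuous.intervalIntegrable (by fun_prop) _ _)]
    ring
  rw [← hpoly, integral_sin_div_eq_integral_sinc]
  refine integral_mono_on hb (Continuous.intervalIntegrable (by fun_prop) _ _)
    (continuous_sinc.intervalIntegrable _ _) fun t ht => ?_
  rcases ht.1.eq_or_lt with rfl | ht₀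
  · simp
  · rw [sinc_of_ne_zero ht₀.ne', le_div_iff₀ ht₀]
    nlinarith [taylor7_le_sin ht₀.le]

lemma sin_five_mul (x : ℝ) :
    sin (5 * x) = sin x * (1 + 2 * cos (2 * x) + 2 * cos (4 * x)) := by
  rw [show 5 * x = x + x + x + x + x by ring, show 4 * x = x + x + x + x by ring,
    show 2 * x = x + x by ring]
  simp only [sin_add, cos_add]
  linear_combination (sin x * (3 * cos x ^ 2 + 1 - sin x ^ 2)) * sin_sq_add_cos_sq x

lemma integral_sin_div_five_mul_sin_div_five :
    ∫ t in π..2 * π, sin t / (5 * sin (t / 5)) =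
      π / 5 + sin (π / 5) / 2 - 3 / 2 * sin (2 * π / 5) := by
  have hcongr : EqOn (fun t => sin t / (5 * sin (t / 5)))
      (fun t => (1 + 2 * cos (2 * (t / 5)) + 2 * cos (4 * (t / 5))) / 5) (uIcc π (2 * π)) := by
    intro t ht
    rw [uIcc_of_le (by linarith [pi_pos])] at ht
    have hsin : sin (t / 5) ≠ 0 :=
      (sin_pos_of_pos_of_lt_pi (by linarith [pi_pos, ht.1]) (by linarith [pi_pos, ht.2])).ne'
    dsimp only
    conv_lhs => rw [show t = 5 * (t / 5) by ring, sin_five_mul]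
    field_simp
  have hderiv : ∀ t, HasDerivAt (fun t => t / 5 + sin (2 * (t / 5)) + sin (4 * (t / 5)) / 2)
      ((1 + 2 * cos (2 * (t / 5)) + 2 * cos (4 * (t / 5))) / 5) t := by
    intro t
    have hu := (hasDerivAt_id' t).div_const 5
    exact ((hu.add (hu.const_mul 2).sin).add ((hu.const_mul 4).sin.div_const 2)).congr_deriv
      (by ring)
  rw [integral_congr hcongr, integral_eq_sub_of_hasDerivAt (fun t _ => hderiv t)
    (Continuous.intervalIntegrable (by fun_prop) _ _)]
  rw [show 2 * (2 * π / 5) = π - π / 5 by ring,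
    show 4 * (2 * π / 5) = -(2 * π / 5) + 2 * π by ring,
    show 2 * (π / 5) = 2 * π / 5 by ring, show 4 * (π / 5) = π - π / 5 by ring,
    sin_pi_sub, sin_add_two_pi, sin_neg]
  ring

lemma one_point_seven_mul_pi_div_four_le :
    1.7 * (π / 4) ≤ (π - π ^ 3 / 18 + π ^ 5 / 600 - π ^ 7 / 35280) +
      (π / 5 + sin (π / 5) / 2 - 3 / 2 * sin (2 * π / 5)) := by
  have hs₁ : π / 5 - (π / 5) ^ 3 / 6 ≤ sin (π / 5) := sin_ge_sub_cube (by positivity)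
  have hs₂ : sin (2 * π / 5) ≤ 2 * π / 5 - (2 * π / 5) ^ 3 / 6 + (2 * π / 5) ^ 5 / 120 :=
    sin_le_taylor5 (by positivity)
  have hl : 3.141592 < π := pi_gt_d6
  have hu : π < 3.141593 := pi_lt_d6
  have h2l : 9.8696002 < π ^ 2 := by nlinarith
  have h2u : π ^ 2 < 9.8696066 := by nlinarith
  have h3l : 31.006257 < π ^ 3 := by nlinarith
  have h3u : π ^ 3 < 31.006287 := by nlinarith
  have h5l : 306.019366 < π ^ 5 := by nlinarith
  have h5u : π ^ 5 < 306.019854 := by nlinarith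
  have h7l : 3020.288829 < π ^ 7 := by nlinarith
  have h7u : π ^ 7 < 3020.295560 := by nlinarith
  nlinarith

lemma integral_sin_div_add_le {c : ℝ} (hc : 5 ≤ c) :
    (∫ t in 0..π, sin t / t) + ∫ t in π..2 * π, sin t / (5 * sin (t / 5)) ≤
      ∫ t in 0..2 * π, sin t / (c * sin (t / c)) := by
  have hc₀ : 0 < c := by linarith
  have hπ := pi_pos
  rw [← integral_add_adjacent_intervals
    (intervalIntegrable_sin_div_mul_sin_div hc₀ le_rfl hπ.le (by nlinarith))
    (intervalIntegrable_sin_div_mul_sin_div hc₀ hπ.le (by linarith) (by nlinarith))]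
  gcongr ?_ + ?_
  · exact integral_mono_on hπ.le (intervalIntegrable_sin_div π)
      (intervalIntegrable_sin_div_mul_sin_div hc₀ le_rfl hπ.le (by nlinarith))
      fun t ht => sin_div_le_sin_div_mul_sin_div (by linarith) ht.1 ht.2
  · exact integral_mono_on (by linarith)
      (intervalIntegrable_sin_div_mul_sin_div (by norm_num) hπ.le (by linarith) (by linarith))
      (intervalIntegrable_sin_div_mul_sin_div hc₀ hπ.le (by linarith) (by nlinarith))
      fun t ht => sin_div_mul_sin_div_le_of_le (by norm_num) hc ht

lemma one_point_seven_le_lower_bound :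
    (1.7 : ℝ) ≤
      4 / π * ((∫ t in 0..π, sin t / t) + ∫ t in π..2 * π, sin t / (5 * sin (t / 5))) := by
  rw [integral_sin_div_five_mul_sin_div_five]
  calc (1.7 : ℝ) = 4 / π * (1.7 * (π / 4)) := by field_simp
    _ ≤ _ := by
      gcongr
      linarith [one_point_seven_mul_pi_div_four_le, taylor_le_integral_sin_div pi_pos.le]

theorem stmt_10 (q : ℕ) (hq : 3 ≤ q)
    (s₂ : ℝ) (hs₂ : s₂ = 2 * π / (2 * (q : ℝ) - 1))
    (Wq : ℝ)
    (hWq : Wq = (4 / π) * ∫ s in (0 : ℝ)..s₂, Real.sin ((2 * (q : ℝ) - 1) * s) / Real.sin s) :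
    Wq = (4 / π) * ∫ t in (0 : ℝ)..(2 * π),
        Real.sin t / ((2 * (q : ℝ) - 1) * Real.sin (t / (2 * (q : ℝ) - 1))) ∧
    (4 / π) * (∫ t in (0 : ℝ)..π, Real.sin t / t) +
      (4 / π) * (∫ t in π..(2 * π), Real.sin t / (5 * Real.sin (t / 5))) ≤ Wq ∧
    (1.7 : ℝ) ≤ Wq := by
  have hc : (5 : ℝ) ≤ 2 * q - 1 := by
    have : (3 : ℝ) ≤ q := by exact_mod_cast hq
    linarith
  have hW : Wq = 4 / π * ∫ t in 0..2 * π, sin t / ((2 * q - 1) * sin (t / (2 * q - 1))) := by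
    rw [hWq, hs₂, integral_sin_mul_div_sin (by linarith)]
  have hlower : 4 / π * (∫ t in 0..π, sin t / t) +
      4 / π * (∫ t in π..2 * π, sin t / (5 * sin (t / 5))) ≤ Wq := by
    rw [hW, ← mul_add]
    exact mul_le_mul_of_nonneg_left (integral_sin_div_add_le hc) (by positivity)
  exact ⟨hW, hlower, (mul_add (4 / π) _ _ ▸ one_point_seven_le_lower_bound).trans hlower⟩
end

section
/- The function h(x) = ∑_{k=0}^{m-1} 2*(A_{m-1-k}/A_m)*x^k, where A_j = ∏_{i=1}^{j} (2i-1)/(2i) (A_0 = 1), satisfies the first-order ODE x(1-x)h'(x) - [(m - 1/2) - (m-1)x]·h(x) = -2m for all real x, and h(1) = 4m. -/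
/-!
The Wallis ratios `A n` satisfy `(2n + 2) A (n + 1) = (2n + 1) A n`. Applied to the monomial
`A (m - 1 - k) x ^ k`, the operator `x (1 - x) d/dx - ((m - 1/2) - (m - 1) x)` gives, by this
recurrence, `b (k + 1) x ^ (k + 1) - b k x ^ k` with `b k = (m - k) A (m - k)`, so on the sum the
terms telescope to `-b 0 = -m A m`. The same recurrence gives `∑_{j < m} A j = 2 m A m`, which is
`h 1 = 4 m`.
-/

open Finset

lemma prod_Icc_odd_div_even_pos (n : ℕ) :
    0 < ∏ i ∈ Icc 1 n, ((2 * (i : ℝ) - 1) / (2 * (i : ℝ))) := by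
  refine prod_pos fun i hi => ?_
  have hi : (1 : ℝ) ≤ i := by exact_mod_cast (mem_Icc.mp hi).1
  apply div_pos <;> linarith

lemma prod_Icc_odd_div_even_succ_mul (n : ℕ) :
    (∏ i ∈ Icc 1 (n + 1), ((2 * (i : ℝ) - 1) / (2 * (i : ℝ)))) * (2 * n + 2)
      = (∏ i ∈ Icc 1 n, ((2 * (i : ℝ) - 1) / (2 * (i : ℝ)))) * (2 * n + 1) := by
  rw [prod_Icc_succ_top (by omega), mul_assoc]
  congr 1
  push_cast
  field_simp
  ring

section WallisRecurrence

variable {a : ℕ → ℝ}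

lemma sum_range_eq_of_wallis_recurrence
    (ha : ∀ n : ℕ, a (n + 1) * (2 * n + 2) = a n * (2 * n + 1)) (m : ℕ) :
    ∑ j ∈ range m, a j = 2 * m * a m := by
  induction m with
  | zero => simp
  | succ n ih =>
    rw [sum_range_succ, ih]
    push_cast
    linear_combination (-1 : ℝ) * ha n

lemma ode_of_wallis_recurrence
    (ha : ∀ n : ℕ, a (n + 1) * (2 * n + 2) = a n * (2 * n + 1)) (m : ℕ) (x : ℝ) :
    x * (1 - x) * ∑ k ∈ range m, a (m - 1 - k) * (k * x ^ (k - 1))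
      - (((m : ℝ) - 1 / 2) - ((m : ℝ) - 1) * x) * ∑ k ∈ range m, a (m - 1 - k) * x ^ k
      = -(m * a m) := by
  set b : ℕ → ℝ := fun k => ((m - k : ℕ) : ℝ) * a (m - k) with hb
  have hterm : ∀ k ∈ range m,
      x * (1 - x) * (a (m - 1 - k) * (k * x ^ (k - 1)))
        - (((m : ℝ) - 1 / 2) - ((m : ℝ) - 1) * x) * (a (m - 1 - k) * x ^ k)
        = b (k + 1) * x ^ (k + 1) - b k * x ^ k := by
    intro k hk
    obtain ⟨n, rfl⟩ : ∃ n, m = k + 1 + n := ⟨m - (k + 1), by grind⟩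
    have hpow : x * (1 - x) * (k * x ^ (k - 1)) = k * x ^ k - k * x ^ (k + 1) := by
      rcases k with _ | k
      · simp
      · simp only [Nat.add_sub_cancel]
        push_cast
        ring
    simp only [hb, show k + 1 + n - 1 - k = n by omega, show k + 1 + n - k = n + 1 by omega,
      show k + 1 + n - (k + 1) = n by omega]
    push_cast
    linear_combination a n * hpow + x ^ k / 2 * ha n
  rw [mul_sum, mul_sum, ← sum_sub_distrib, sum_congr rfl hterm, sum_range_sub (fun k => b k * x ^ k)]
  simp [hb]

end WallisRecurrence

theorem stmt_11_general (m : ℕ)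
    (A : ℕ → ℝ) (hA : ∀ j, A j = ∏ i ∈ Finset.Icc 1 j, ((2 * (i : ℝ) - 1) / (2 * (i : ℝ))))
    (h : ℝ → ℝ)
    (hh : ∀ x : ℝ, h x = ∑ k ∈ Finset.range m, 2 * (A (m - 1 - k) / A m) * x ^ k) :
    (∀ x : ℝ,
      x * (1 - x) * deriv h x - (((m : ℝ) - 1 / 2) - ((m : ℝ) - 1) * x) * h x = -(2 * m)) ∧
    h 1 = 4 * m := by
  have hrec : ∀ n : ℕ, A (n + 1) * (2 * n + 2) = A n * (2 * n + 1) := fun n => by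
    rw [hA, hA]
    exact prod_Icc_odd_div_even_succ_mul n
  have hAm : A m ≠ 0 := by
    rw [hA]
    exact (prod_Icc_odd_div_even_pos m).ne'
  have hh' : h = fun x => 2 / A m * ∑ k ∈ range m, A (m - 1 - k) * x ^ k := by
    funext x
    rw [hh, mul_sum]
    exact sum_congr rfl fun k _ => by ring
  have hderiv : ∀ x, HasDerivAt h (2 / A m * ∑ k ∈ range m, A (m - 1 - k) * (k * x ^ (k - 1))) x :=
    fun x => hh' ▸ (HasDerivAt.fun_sum fun k _ => (hasDerivAt_pow k x).const_mul _).const_mul _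
  refine ⟨fun x => ?_, ?_⟩
  · rw [(hderiv x).deriv, hh']
    calc _ = 2 / A m * (x * (1 - x) * ∑ k ∈ range m, A (m - 1 - k) * (k * x ^ (k - 1))
          - (((m : ℝ) - 1 / 2) - ((m : ℝ) - 1) * x) * ∑ k ∈ range m, A (m - 1 - k) * x ^ k) := by
          ring
      _ = -(2 * m) := by
          rw [ode_of_wallis_recurrence hrec]
          field_simp
  · simp only [hh', one_pow, mul_one]
    rw [sum_range_reflect A m, sum_range_eq_of_wallis_recurrence hrec]
    field_simp
    ring

theorem stmt_11 (m : ℕ) (hm : 1 ≤ m)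
    (A : ℕ → ℝ) (hA : ∀ j, A j = ∏ i ∈ Finset.Icc 1 j, ((2 * (i : ℝ) - 1) / (2 * (i : ℝ))))
    (h : ℝ → ℝ)
    (hh : ∀ x : ℝ, h x = ∑ k ∈ Finset.range m, 2 * (A (m - 1 - k) / A m) * x ^ k) :
    (∀ x : ℝ,
      x * (1 - x) * deriv h x - (((m : ℝ) - 1 / 2) - ((m : ℝ) - 1) * x) * h x = -(2 * m)) ∧
    h 1 = 4 * m :=
  stmt_11_general m A hA h hh
end

section
/- Let θ(x) = (1/2)∫_0^x √((1-s)/s)·h(s) ds for x ∈ [0,1], where h is the polynomial satisfying x(1-x)h'(x) - [(m-1/2)-(m-1)x]h(x) = -2m. Then θ(x) - (1/m)·x·θ'(x) - π = -arccos(2x-1) for all x ∈ (0,1). -/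
/-!
Writing `√((1-s)/s) = √(s(1-s))/s`, the differential equation satisfied by `h` says exactly that
`ψ(t) = m⁻¹ √(t(1-t)) h(t) + 2 arcsin(2t-1)` is a primitive of `√((1-t)/t) h(t)` on `(0,1)`.
Since `ψ(0) = -π`, this gives `θ = (ψ + π)/2`, while `θ' = √((1-x)/x) h / 2`; in
`θ - m⁻¹ x θ'` the `h`-terms cancel and what is left is `arcsin(2x-1) - π/2 = -arccos(2x-1)`.
-/

open Real

theorem Real.sqrt_div_eq_sqrt_mul_div (a : ℝ) {t : ℝ} (ht : 0 < t) :
    √(a / t) = √(t * a) / t := by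
  rw [show a / t = t * a / t ^ 2 by field_simp, Real.sqrt_div' _ (sq_nonneg t),
    Real.sqrt_sq ht.le]

section UnitInterval

variable {t : ℝ}

theorem hasDerivAt_sqrt_mul_one_sub (ht : t ∈ Set.Ioo (0 : ℝ) 1) :
    HasDerivAt (fun s ↦ √(s * (1 - s))) ((1 - 2 * t) / (2 * √(t * (1 - t)))) t := by
  have hpos : 0 < t * (1 - t) := mul_pos ht.1 (sub_pos.2 ht.2)
  have hpoly : HasDerivAt (fun s : ℝ ↦ s * (1 - s)) (1 - 2 * t) t := by
    refine ((hasDerivAt_id t).mul ((hasDerivAt_const t 1).sub (hasDerivAt_id t))).congr_deriv ?_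
    simp only [Pi.sub_apply, id_eq]
    ring
  refine ((Real.hasDerivAt_sqrt hpos.ne').comp t hpoly).congr_deriv ?_
  ring

theorem hasDerivAt_arcsin_two_mul_sub_one (ht : t ∈ Set.Ioo (0 : ℝ) 1) :
    HasDerivAt (fun s ↦ arcsin (2 * s - 1)) (1 / √(t * (1 - t))) t := by
  have hlin : HasDerivAt (fun s : ℝ ↦ 2 * s - 1) 2 t := by
    simpa using ((hasDerivAt_id t).const_mul (2 : ℝ)).sub_const 1
  have hsqrt : √(1 - (2 * t - 1) ^ 2) = 2 * √(t * (1 - t)) := by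
    rw [show 1 - (2 * t - 1) ^ 2 = 2 ^ 2 * (t * (1 - t)) by ring,
      Real.sqrt_mul (by positivity), Real.sqrt_sq zero_le_two]
  refine ((hasDerivAt_arcsin (by linarith [ht.1]) (by linarith [ht.2])).comp t
    hlin).congr_deriv ?_
  have : 0 < √(t * (1 - t)) := Real.sqrt_pos.2 (mul_pos ht.1 (sub_pos.2 ht.2))
  rw [hsqrt]
  field_simp

end UnitInterval

theorem intervalIntegrable_sqrt_one_sub_div {x : ℝ} (hx : 0 ≤ x) :
    IntervalIntegrable (fun s ↦ √((1 - s) / s)) MeasureTheory.volume 0 x := by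
  refine (intervalIntegral.intervalIntegrable_rpow' (r := -(1 / 2)) (by norm_num)).mono_fun
    (Real.continuous_sqrt.measurable.comp (by fun_prop)).aestronglyMeasurable ?_
  rw [Set.uIoc_of_le hx]
  filter_upwards [MeasureTheory.ae_restrict_mem measurableSet_Ioc] with s hs
  have hs0 : 0 < s := hs.1
  rw [Real.norm_of_nonneg (Real.sqrt_nonneg _), Real.norm_of_nonneg (by positivity),
    Real.rpow_neg hs0.le, ← Real.sqrt_eq_rpow, ← Real.sqrt_inv]
  exact Real.sqrt_le_sqrt ((div_le_div_of_nonneg_right (by linarith) hs0.le).trans_eq (one_div s))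

noncomputable def thetaPrimitive (m : ℝ) (h : ℝ → ℝ) (t : ℝ) : ℝ :=
  m⁻¹ * (√(t * (1 - t)) * h t) + 2 * arcsin (2 * t - 1)

section Primitive

variable {m : ℝ} {h : ℝ → ℝ}

theorem thetaPrimitive_zero : thetaPrimitive m h 0 = -π := by
  simp [thetaPrimitive]
  ring

theorem hasDerivAt_thetaPrimitive (hm : m ≠ 0) {t : ℝ} (ht : t ∈ Set.Ioo (0 : ℝ) 1)
    (hd : DifferentiableAt ℝ h t)
    (hode : t * (1 - t) * deriv h t - ((m - 1 / 2) - (m - 1) * t) * h t = -(2 * m)) :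
    HasDerivAt (thetaPrimitive m h) (√((1 - t) / t) * h t) t := by
  have hpos : 0 < t * (1 - t) := mul_pos ht.1 (sub_pos.2 ht.2)
  set u := √(t * (1 - t))
  have hu : 0 < u := Real.sqrt_pos.2 hpos
  have hu2 : u ^ 2 = t * (1 - t) := Real.sq_sqrt hpos.le
  have hderiv : deriv h t = (((m - 1 / 2) - (m - 1) * t) * h t - 2 * m) / u ^ 2 := by
    rw [hu2, eq_div_iff hpos.ne']; linarith
  refine ((((hasDerivAt_sqrt_mul_one_sub ht).mul hd.hasDerivAt).const_mul m⁻¹).add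
    ((hasDerivAt_arcsin_two_mul_sub_one ht).const_mul 2)).congr_deriv ?_
  rw [Real.sqrt_div_eq_sqrt_mul_div _ ht.1, hderiv]
  have ht0 := ht.1.ne'
  field_simp
  linear_combination (-2 * m * h t * u ^ 2) * hu2

theorem integral_sqrt_one_sub_div_mul_eq (hm : m ≠ 0) (hdiff : Differentiable ℝ h)
    (hode : ∀ t ∈ Set.Ioo (0 : ℝ) 1,
      t * (1 - t) * deriv h t - ((m - 1 / 2) - (m - 1) * t) * h t = -(2 * m))
    {x : ℝ} (hx : x ∈ Set.Ioo (0 : ℝ) 1) :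
    ∫ s in (0 : ℝ)..x, √((1 - s) / s) * h s = thetaPrimitive m h x + π := by
  have hcont : Continuous (thetaPrimitive m h) := by
    have := hdiff.continuous
    unfold thetaPrimitive
    fun_prop
  rw [intervalIntegral.integral_eq_sub_of_hasDerivAt_of_le hx.1.le hcont.continuousOn
    (fun t ht ↦ have ht' : t ∈ Set.Ioo (0 : ℝ) 1 := ⟨ht.1, ht.2.trans hx.2⟩
      hasDerivAt_thetaPrimitive hm ht' (hdiff t) (hode t ht'))
    ((intervalIntegrable_sqrt_one_sub_div hx.1.le).mul_continuousOn
      hdiff.continuous.continuousOn), thetaPrimitive_zero, sub_neg_eq_add]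

end Primitive

theorem hasDerivAt_integral_sqrt_one_sub_div_mul {h : ℝ → ℝ} (hh : Continuous h) {x : ℝ}
    (hx : 0 < x) :
    HasDerivAt (fun u ↦ ∫ s in (0 : ℝ)..u, √((1 - s) / s) * h s) (√((1 - x) / x) * h x) x :=
  intervalIntegral.integral_hasDerivAt_right
    ((intervalIntegrable_sqrt_one_sub_div hx.le).mul_continuousOn hh.continuousOn)
    (Measurable.stronglyMeasurable (by fun_prop)).stronglyMeasurableAtFilter
    (by fun_prop (disch := exact hx.ne'))

theorem stmt_12_general (m : ℕ) (hm : 1 ≤ m)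
    (A : ℕ → ℝ)
    (h : ℝ → ℝ)
    (hh : ∀ x : ℝ, h x = ∑ k ∈ Finset.range m, 2 * (A (m - 1 - k) / A m) * x ^ k)
    (hODE : ∀ x : ℝ,
      x * (1 - x) * deriv h x - (((m : ℝ) - 1 / 2) - ((m : ℝ) - 1) * x) * h x = -(2 * m))
    (θ : ℝ → ℝ)
    (hθ : ∀ x : ℝ, θ x = (1 / 2) * ∫ s in (0 : ℝ)..x, Real.sqrt ((1 - s) / s) * h s) :
    ∀ x ∈ Set.Ioo (0 : ℝ) 1,
      θ x - (1 / (m : ℝ)) * x * deriv θ x - π = -Real.arccos (2 * x - 1) := by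
  intro x hx
  have hm0 : (m : ℝ) ≠ 0 := Nat.cast_ne_zero.2 (by omega)
  have hdiff : Differentiable ℝ h := by
    rw [funext hh]
    fun_prop
  have hθ' : deriv θ x = 1 / 2 * (√((1 - x) / x) * h x) := by
    rw [funext hθ]
    exact ((hasDerivAt_integral_sqrt_one_sub_div_mul hdiff.continuous hx.1).const_mul _).deriv
  rw [hθ', hθ, integral_sqrt_one_sub_div_mul_eq hm0 hdiff (fun t _ ↦ hODE t) hx, thetaPrimitive,
    Real.sqrt_div_eq_sqrt_mul_div _ hx.1, Real.arccos_eq_pi_div_two_sub_arcsin]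
  have := hx.1.ne'
  field_simp
  ring

theorem stmt_12 (m : ℕ) (hm : 1 ≤ m)
    (A : ℕ → ℝ) (hA : ∀ j, A j = ∏ i ∈ Finset.Icc 1 j, ((2 * (i : ℝ) - 1) / (2 * (i : ℝ))))
    (h : ℝ → ℝ)
    (hh : ∀ x : ℝ, h x = ∑ k ∈ Finset.range m, 2 * (A (m - 1 - k) / A m) * x ^ k)
    (hODE : ∀ x : ℝ,
      x * (1 - x) * deriv h x - (((m : ℝ) - 1 / 2) - ((m : ℝ) - 1) * x) * h x = -(2 * m))
    (θ : ℝ → ℝ)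
    (hθ : ∀ x : ℝ, θ x = (1 / 2) * ∫ s in (0 : ℝ)..x, Real.sqrt ((1 - s) / s) * h s) :
    ∀ x ∈ Set.Ioo (0 : ℝ) 1,
      θ x - (1 / (m : ℝ)) * x * deriv θ x - π = -Real.arccos (2 * x - 1) :=
  stmt_12_general m hm A h hh hODE θ hθ
end

section
/- Let B, A, C be square matrices (of the same size 2m) written in 2×2 block form with m×m blocks, with C = [[I,0],[0,0]] + BA. Suppose BAC = [[0,0],[C₂₁,C₂₂]] (the matrix identity of Proposition 2.7). Then C₁₁ - I = -C₁₂ C₂₁ C₁₁⁻¹ and (I - C₂₂)⁻¹ C₂₁ = C₂₁ C₁₁⁻¹, provided C₁₁ and I - C₂₂ are invertible. -/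
theorem stmt_19 (m : ℕ)
    (B A C : Matrix (Fin m ⊕ Fin m) (Fin m ⊕ Fin m) ℝ)
    (hC : C = Matrix.fromBlocks 1 0 0 0 + B * A)
    (hBAC : B * A * C = Matrix.fromBlocks 0 0 C.toBlocks₂₁ C.toBlocks₂₂)
    (h11 : IsUnit C.toBlocks₁₁) (h22 : IsUnit (1 - C.toBlocks₂₂)) :
    C.toBlocks₁₁ - 1 = -(C.toBlocks₁₂ * C.toBlocks₂₁ * (C.toBlocks₁₁)⁻¹) ∧
    (1 - C.toBlocks₂₂)⁻¹ * C.toBlocks₂₁ = C.toBlocks₂₁ * (C.toBlocks₁₁)⁻¹ := by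
  set a := C.toBlocks₁₁ with ha
  set b := C.toBlocks₁₂ with hb
  set c := C.toBlocks₂₁ with hcc
  set d := C.toBlocks₂₂ with hd
  have hCb : C = Matrix.fromBlocks a b c d := (Matrix.fromBlocks_toBlocks C).symm
  have hBA : B * A = C - Matrix.fromBlocks 1 0 0 0 := by rw [hC, add_sub_cancel_left]
  have key : (Matrix.fromBlocks a b c d - Matrix.fromBlocks 1 0 0 0) *
      Matrix.fromBlocks a b c d = Matrix.fromBlocks 0 0 c d := by
    rw [← hCb, ← hBA]; exact hBAC
  have key2 : Matrix.fromBlocks (a - 1) b c d * Matrix.fromBlocks a b c d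
      = Matrix.fromBlocks 0 0 c d := by
    rw [show Matrix.fromBlocks a b c d - Matrix.fromBlocks 1 0 0 0
        = Matrix.fromBlocks (a - 1) b c d by
      ext i j; rcases i with i | i <;> rcases j with j | j <;>
        simp [Matrix.fromBlocks]] at key
    exact key
  rw [Matrix.fromBlocks_multiply] at key2
  have e11 : (a - 1) * a + b * c = 0 := congrArg Matrix.toBlocks₁₁ key2
  have e21 : c * a + d * c = c := congrArg Matrix.toBlocks₂₁ key2
  have hdet : IsUnit a.det := (Matrix.isUnit_iff_isUnit_det a).mp h11
  have hainv : a * a⁻¹ = 1 := Matrix.mul_nonsing_inv a hdet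
  constructor
  · have : (a - 1) * a * a⁻¹ + b * c * a⁻¹ = 0 := by
      rw [← add_mul, e11, zero_mul]
    rw [mul_assoc, hainv, mul_one] at this
    linear_combination (norm := noncomm_ring) this
  · have e21' : (1 - d) * c = c * a := by noncomm_ring; linear_combination (norm := noncomm_ring) -e21
    have hdet2 : IsUnit (1 - d).det := (Matrix.isUnit_iff_isUnit_det _).mp h22
    have : (1 - d)⁻¹ * ((1 - d) * c) = (1 - d)⁻¹ * (c * a) := by rw [e21']
    rw [← mul_assoc, Matrix.nonsing_inv_mul _ hdet2, one_mul] at this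
    have h2 : c * a⁻¹ = (1 - d)⁻¹ * (c * a) * a⁻¹ := by rw [← this]
    rw [mul_assoc, mul_assoc, hainv, mul_one] at h2
    exact h2.symm
end
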